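/- arXiv:0809.1541 — 2 statements merged into one kernel-verified Lean document; each statement's English description precedes it below -/
import Mathlib

section
/- Let 𝒟 be a floor diagram of genus 0 and degree d, and let m : {1,…,n} → 𝒟 be a marking of type (α,β,γ,δ) where n = 2d−1+|α+β+2γ+2δ|. Then every vertex in Vert(𝒟) and every edge not adjacent to a source lies in the image of m. -/
open scoped Classical

/-- `ℕ^∞`: finitely supported sequences of nonnegative integers. -/
abbrev Vec : Type := ℕ →₀ ℕ

/-- `|α| = Σᵢ (α)ᵢ`. -/
def vabs (a : Vec) : ℕ := a.sum fun _ v => v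

/-- `Iα = Σᵢ i·(α)ᵢ`. -/
def vI (a : Vec) : ℕ := a.sum fun i v => i * v

/-- Partial sum `Σ_{j=1}^{k} (α)_j`. -/
def psum (a : Vec) (k : ℕ) : ℕ := ∑ j ∈ Finset.Icc 1 k, a j

/-- `I^α = Πᵢ i^{(α)_i}` as a rational number. -/
def Iexp (a : Vec) : ℚ := ∏ i ∈ a.support, (i : ℚ) ^ a i

/-- A weighted oriented graph: a list of oriented edges with positive weights. -/
structure WGraph (V : Type) where
  edges : List (V × V)
  weight : Fin edges.length → ℕ
  weight_pos : ∀ i, 0 < weight i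

namespace WGraph

variable {V V' : Type} [Fintype V] [Fintype V']

def tail (G : WGraph V) (i : Fin G.edges.length) : V := (G.edges.get i).1

def head (G : WGraph V) (i : Fin G.edges.length) : V := (G.edges.get i).2

def Adj (G : WGraph V) (u v : V) : Prop :=
  ∃ i, (G.tail i = u ∧ G.head i = v) ∨ (G.tail i = v ∧ G.head i = u)

def Connected (G : WGraph V) : Prop := ∀ u v : V, Relation.ReflTransGen G.Adj u v

/-- A tree: connected with Euler characteristic `#V - #E = 1`. -/
def IsTree (G : WGraph V) : Prop := G.Connected ∧ Fintype.card V = G.edges.length + 1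

/-- A source: all adjacent edges are outgoing. -/
def IsSource (G : WGraph V) (v : V) : Prop := ∀ i, G.head i ≠ v

/-- Divergence: sum of incoming weights minus sum of outgoing weights. -/
noncomputable def div (G : WGraph V) (v : V) : ℤ :=
  (∑ i, if G.head i = v then (G.weight i : ℤ) else 0)
    - ∑ i, if G.tail i = v then (G.weight i : ℤ) else 0

/-- Floor diagram of genus 0 and degree `d`. -/
def IsFloorDiagram (G : WGraph V) (d : ℕ) : Prop :=
  G.IsTree ∧ (∀ v, ¬ G.IsSource v → G.div v = 1) ∧
  (∀ v, G.IsSource v → ∃! i, G.tail i = v) ∧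
  (∑ v : V, if G.IsSource v then G.div v else 0) = -(d : ℤ)

/-- Edge adjacent to a source (`Edge^∞`). -/
def IsInfEdge (G : WGraph V) (i : Fin G.edges.length) : Prop :=
  G.IsSource (G.tail i) ∨ G.IsSource (G.head i)

/-- Adjacency between elements (vertices or edges) of the graph. -/
def ElemAdj (G : WGraph V) : V ⊕ Fin G.edges.length → V ⊕ Fin G.edges.length → Prop
  | Sum.inl v, Sum.inr e => G.tail e = v ∨ G.head e = v
  | Sum.inr e, Sum.inl v => G.tail e = v ∨ G.head e = v
  | _, _ => False

/-- One step of the natural partial order on an oriented tree. -/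
def Step (G : WGraph V) : V ⊕ Fin G.edges.length → V ⊕ Fin G.edges.length → Prop
  | Sum.inr e, Sum.inl v => G.head e = v
  | Sum.inl v, Sum.inr e => G.tail e = v
  | _, _ => False

/-- The natural (strict) partial order "greater than" on elements of an oriented tree. -/
def ElemGT (G : WGraph V) : V ⊕ Fin G.edges.length → V ⊕ Fin G.edges.length → Prop :=
  Relation.TransGen G.Step

end WGraph

/-- `n = 2d - 1 + |α+β+2γ+2δ|` where `d = Iα+Iβ+2Iγ+2Iδ`. -/
noncomputable def mn (α β γ δ : Vec) : ℕ :=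
  2 * (vI α + vI β + 2 * vI γ + 2 * vI δ) - 1 + vabs (α + β + 2 • γ + 2 • δ)

namespace WGraph

variable {V V' : Type} [Fintype V] [Fintype V']

/-- A marking of type `(α,β,γ,δ)` of a floor diagram, with marked points indexed by
`1,…,n`. -/
structure IsMarking (G : WGraph V) (α β γ δ : Vec)
    (m : ℕ → V ⊕ Fin G.edges.length) : Prop where
  floor : G.IsFloorDiagram (vI α + vI β + 2 * vI γ + 2 * vI δ)
  inj : Set.InjOn m (Set.Icc 1 (mn α β γ δ))
  mono : ∀ i ∈ Set.Icc 1 (mn α β γ δ), ∀ j ∈ Set.Icc 1 (mn α β γ δ),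
      G.ElemGT (m i) (m j) → j < i
  srcA : ∀ k, 1 ≤ k → ∀ i, psum α (k-1) + 1 ≤ i → i ≤ psum α k →
      ∃ v, m i = Sum.inl v ∧ G.IsSource v ∧ G.div v = -(k : ℤ)
  srcG : ∀ k, 1 ≤ k → ∀ i, vabs α + 2 * psum γ (k-1) + 1 ≤ i →
      i ≤ vabs α + 2 * psum γ k →
      ∃ v, m i = Sum.inl v ∧ G.IsSource v ∧ G.div v = -(k : ℤ)
  edgeCount : ∀ k, 1 ≤ k →
      {e : Fin G.edges.length | G.IsInfEdge e ∧ G.weight e = k ∧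
        ∃ i ∈ Set.Icc 1 (mn α β γ δ), m i = Sum.inr e}.ncard = β k + 2 * δ k
  srcEdge : ∀ v, G.IsSource v → ∀ e, (G.tail e = v ∨ G.head e = v) →
      Xor' (∃ i ∈ Set.Icc 1 (mn α β γ δ), m i = Sum.inl v)
           (∃ i ∈ Set.Icc 1 (mn α β γ δ), m i = Sum.inr e)

/-- `{i, i+1}` is an `r`-pair. -/
def IsRPair (α γ : Vec) (n r i : ℕ) : Prop :=
  (∃ k, 1 ≤ k ∧ k ≤ vabs γ ∧ i = vabs α + 2 * k - 1) ∨
  (∃ k, 1 ≤ k ∧ k ≤ r ∧ i = n - 2 * k + 1)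

/-- Membership in `Im(𝒟,m,r)`. -/
def InIm (G : WGraph V) (α γ : Vec) (r n : ℕ)
    (m : ℕ → V ⊕ Fin G.edges.length) (a : V ⊕ Fin G.edges.length) : Prop :=
  ∃ i, IsRPair α γ n r i ∧ ¬ G.ElemAdj (m i) (m (i+1)) ∧ (a = m i ∨ a = m (i+1))

/-- The involution `ρ_{𝒟,m,r}`. -/
noncomputable def rho (G : WGraph V) (α γ : Vec) (r n : ℕ)
    (m : ℕ → V ⊕ Fin G.edges.length) (a : V ⊕ Fin G.edges.length) :
    V ⊕ Fin G.edges.length :=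
  if h : InIm G α γ r n m a then
    (if a = m (Classical.choose h) then m (Classical.choose h + 1)
     else m (Classical.choose h))
  else a

/-- Equivalence of marked (weighted, oriented) graphs. -/
def MEquiv (G : WGraph V) (m : ℕ → V ⊕ Fin G.edges.length)
    (G' : WGraph V') (m' : ℕ → V' ⊕ Fin G'.edges.length) (n : ℕ) : Prop :=
  ∃ (φ : V ≃ V') (σ : Fin G.edges.length ≃ Fin G'.edges.length),
    (∀ e, G'.tail (σ e) = φ (G.tail e)) ∧ (∀ e, G'.head (σ e) = φ (G.head e)) ∧
    (∀ e, G'.weight (σ e) = G.weight e) ∧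
    ∀ i ∈ Set.Icc 1 n, m' i = Sum.map φ σ (m i)

/-- Isomorphism of weighted oriented graphs (forgetting markings). -/
def GEquiv (G : WGraph V) (G' : WGraph V') : Prop :=
  ∃ (φ : V ≃ V') (σ : Fin G.edges.length ≃ Fin G'.edges.length),
    (∀ e, G'.tail (σ e) = φ (G.tail e)) ∧ (∀ e, G'.head (σ e) = φ (G.head e)) ∧
    (∀ e, G'.weight (σ e) = G.weight e)

/-- `(𝒟,m)` is `r`-real. -/
def IsRReal (G : WGraph V) (α β γ δ : Vec) (r : ℕ)
    (m : ℕ → V ⊕ Fin G.edges.length) : Prop :=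
  MEquiv G m G (fun i => rho G α γ r (mn α β γ δ) m (m i)) (mn α β γ δ) ∧
  ∀ k, 1 ≤ k → {e : Fin G.edges.length | G.IsInfEdge e ∧ G.weight e = k ∧
      InIm G α γ r (mn α β γ δ) m (Sum.inr e)}.ncard = 2 * δ k

/-- Complex multiplicity `μ^ℂ`. -/
noncomputable def muC (G : WGraph V) (α β γ δ : Vec) : ℚ :=
  (Iexp (2 • α + β + 4 • γ + 2 • δ))⁻¹ * ∏ e, (G.weight e : ℚ) ^ 2

/-- `r`-real multiplicity `μ^ℝ_r`. -/
noncomputable def muR (G : WGraph V) (α β γ δ : Vec) (r : ℕ)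
    (m : ℕ → V ⊕ Fin G.edges.length) : ℚ :=
  if IsRReal G α β γ δ r m ∧
      (∀ e, 2 ∣ G.weight e → InIm G α γ r (mn α β γ δ) m (Sum.inr e)) then
    (-1 : ℚ) ^ (({v : V | ¬ G.IsSource v ∧
        InIm G α γ r (mn α β γ δ) m (Sum.inl v)}.ncard) / 2)
      * (Iexp δ)⁻¹
      * ∏ e ∈ Finset.univ.filter
          (fun e => ¬ ∃ i ∈ Set.Icc 1 (mn α β γ δ - 2 * r), m i = Sum.inr e),
          (G.weight e : ℚ)
  else 0

end WGraph

/-- A bundled marked floor diagram of type `(α,β,γ,δ)`. -/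
structure BMFD (α β γ δ : Vec) : Type 1 where
  V : Type
  [fV : Fintype V]
  G : WGraph V
  m : ℕ → V ⊕ Fin G.edges.length
  marking : G.IsMarking α β γ δ m

attribute [instance] BMFD.fV

/-- Equivalence of bundled marked floor diagrams. -/
def BMFD.Equiv {α β γ δ : Vec} (X Y : BMFD α β γ δ) : Prop :=
  WGraph.MEquiv X.G X.m Y.G Y.m (mn α β γ δ)

noncomputable def BMFD.muC' {α β γ δ : Vec} (X : BMFD α β γ δ) : ℚ :=
  WGraph.muC X.G α β γ δ

noncomputable def BMFD.muR' {α β γ δ : Vec} (X : BMFD α β γ δ) (r : ℕ) : ℚ :=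
  WGraph.muR X.G α β γ δ r X.m

/-! Let `S` be the set of sources. Every non-source has divergence `1` and the divergences add up
to `0`, so there are `d` non-sources; as `𝒟` is a tree it has `2d - 1 + 2|S|` elements, `2|S|` of
which are sources or edges adjacent to them. The marking meets each pair {source, its edge} exactly
once, so it places `n - |S|` points on the remaining `2d - 1` elements, and it suffices to show
`|S| ≤ |α + β + 2γ + 2δ|`. Points marked at sources or at their edges provide at least
`αₖ + βₖ + 2γₖ + 2δₖ` sources of weight `k` (the weight of a source being that of its edge);
since the weights of all sources add up to `d = Σₖ k (αₖ + βₖ + 2γₖ + 2δₖ)`, these bounds are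
equalities. -/

open Finset

theorem sum_eq_sum_of_le_of_sum_mul_eq {t : Finset ℕ} {f g : ℕ → ℕ} (ht : ∀ k ∈ t, 1 ≤ k)
    (hfg : ∀ k ∈ t, f k ≤ g k) (h : ∑ k ∈ t, k * f k = ∑ k ∈ t, k * g k) :
    ∑ k ∈ t, f k = ∑ k ∈ t, g k :=
  sum_congr rfl fun k hk => Nat.eq_of_mul_eq_mul_left (ht k hk)
    ((sum_eq_sum_iff_of_le fun k hk => Nat.mul_le_mul_left k (hfg k hk)).1 h k hk)

theorem vabs_add (a b : Vec) : vabs (a + b) = vabs a + vabs b :=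
  Finsupp.sum_add_index (by simp) (by simp)

theorem sum_le_vabs (a : Vec) (t : Finset ℕ) : ∑ k ∈ t, a k ≤ vabs a :=
  sum_le_sum_of_ne_zero fun _ _ hne => Finsupp.mem_support_iff.2 hne

theorem psum_le_vabs (a : Vec) (k : ℕ) : psum a k ≤ vabs a :=
  sum_le_vabs a _

theorem psum_eq_psum_sub_one_add {k : ℕ} (a : Vec) (hk : 1 ≤ k) :
    psum a k = psum a (k - 1) + a k := by
  obtain ⟨k, rfl⟩ := Nat.exists_eq_add_of_le' hk
  simp [psum, sum_Icc_succ_top]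

theorem sum_Icc_mul_eq_vI {D : ℕ} (a : Vec) (hD : vI a ≤ D) :
    ∑ k ∈ Icc 1 D, k * a k = vI a := by
  have hsupp : a.support ⊆ insert 0 (Icc 1 D) := by
    intro i hi
    have hle : i * a i ≤ vI a := single_le_sum (f := fun i => i * a i) (by simp) hi
    have hpos : 1 ≤ a i := Nat.one_le_iff_ne_zero.2 (Finsupp.mem_support_iff.1 hi)
    have hi_le : i ≤ i * a i := Nat.le_mul_of_pos_right i hpos
    simp only [mem_insert, mem_Icc]
    omega
  rw [vI, Finsupp.sum_of_support_subset a hsupp _ (by simp), sum_insert (by simp)]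
  simp

theorem mn_eq (α β γ δ : Vec) :
    mn α β γ δ = 2 * (vI α + vI β + 2 * vI γ + 2 * vI δ) - 1
      + (vabs α + vabs β + 2 * vabs γ + 2 * vabs δ) := by
  simp only [mn, two_smul, vabs_add]
  ring

namespace WGraph

variable {V : Type} (G : WGraph V)

noncomputable def outWeight (v : V) : ℕ := ∑ i, if G.tail i = v then G.weight i else 0

/-- On `infElems`, the source of the pair {source, its edge} that an element belongs to. -/
def elemSource : V ⊕ Fin G.edges.length → V := Sum.elim id G.tail

noncomputable def markedElems (m : ℕ → V ⊕ Fin G.edges.length) (n : ℕ) :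
    Finset (V ⊕ Fin G.edges.length) :=
  (Icc 1 n).image m

variable {G}

theorem isInfEdge_iff (e : Fin G.edges.length) : G.IsInfEdge e ↔ G.IsSource (G.tail e) :=
  or_iff_left fun h => h e rfl

theorem mem_markedElems {m : ℕ → V ⊕ Fin G.edges.length} {n : ℕ} {a : V ⊕ Fin G.edges.length} :
    a ∈ G.markedElems m n ↔ ∃ i ∈ Set.Icc 1 n, m i = a := by
  simp [markedElems]

theorem IsSource.div_eq {v : V} (hv : G.IsSource v) : G.div v = -(G.outWeight v : ℤ) := by
  simp [div, outWeight, hv _]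

theorem outWeight_eq_weight {v : V} {e : Fin G.edges.length} (he : G.tail e = v)
    (hu : ∀ e', G.tail e' = v → e' = e) : G.outWeight v = G.weight e := by
  rw [outWeight, sum_eq_single e (fun b _ hb => if_neg (mt (hu b) hb)) (by simp), if_pos he]

variable (G) in
noncomputable def infEdges : Finset (Fin G.edges.length) := univ.filter G.IsInfEdge

theorem mem_infEdges {e : Fin G.edges.length} : e ∈ G.infEdges ↔ G.IsSource (G.tail e) := by
  simp [infEdges, isInfEdge_iff]

variable [Fintype V]

variable (G) in
noncomputable def sources : Finset V := univ.filter G.IsSource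

variable (G) in
noncomputable def infElems : Finset (V ⊕ Fin G.edges.length) := G.sources.disjSum G.infEdges

variable (G) in
noncomputable def markedInfElemsOfWeight (m : ℕ → V ⊕ Fin G.edges.length) (n k : ℕ) :
    Finset (V ⊕ Fin G.edges.length) :=
  (G.markedElems m n ∩ G.infElems).filter fun a => G.outWeight (G.elemSource a) = k

theorem mem_sources {v : V} : v ∈ G.sources ↔ G.IsSource v := by
  simp [sources]

theorem elemSource_mem_sources {a : V ⊕ Fin G.edges.length} (ha : a ∈ G.infElems) :
    G.elemSource a ∈ G.sources := by
  cases a <;> simpa [infElems, elemSource, mem_infEdges, mem_sources] using ha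

variable (G) in
theorem sum_div_eq_zero : ∑ v, G.div v = 0 := by
  simp only [div, sum_sub_distrib]
  rw [sum_comm, sum_comm (f := fun v i => if G.tail i = v then (G.weight i : ℤ) else 0)]
  simp

namespace IsFloorDiagram

variable {d : ℕ} (hG : G.IsFloorDiagram d)
include hG

theorem sum_outWeight : ∑ v ∈ G.sources, G.outWeight v = d := by
  have h := hG.2.2.2
  rw [← sum_filter, ← sources, sum_congr rfl fun v hv => (mem_sources.1 hv).div_eq] at h
  simp only [sum_neg_distrib, neg_inj] at h
  exact_mod_cast h

theorem card_eq_add_card_sources : Fintype.card V = d + #G.sources := by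
  have hsplit := sum_filter_add_sum_filter_not univ G.IsSource G.div
  rw [sum_div_eq_zero, sum_filter, hG.2.2.2,
    sum_congr rfl fun v hv => hG.2.1 v (mem_filter.1 hv).2] at hsplit
  rw [← card_univ, ← card_filter_add_card_filter_not (s := univ) G.IsSource, ← sources]
  simp only [sum_const, nsmul_eq_mul, mul_one] at hsplit
  omega

theorem outWeight_tail {e : Fin G.edges.length} (he : e ∈ G.infEdges) :
    G.outWeight (G.tail e) = G.weight e := by
  obtain ⟨e', -, hu⟩ := hG.2.2.1 _ (mem_infEdges.1 he)
  exact outWeight_eq_weight rfl fun e'' h => (hu e'' h).trans (hu e rfl).symm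

theorem one_le_outWeight {v : V} (hv : v ∈ G.sources) : 1 ≤ G.outWeight v := by
  obtain ⟨e, he, -⟩ := hG.2.2.1 v (mem_sources.1 hv)
  rw [← he, hG.outWeight_tail (mem_infEdges.2 (he ▸ mem_sources.1 hv))]
  exact G.weight_pos e

theorem injOn_tail_infEdges : Set.InjOn G.tail G.infEdges := by
  intro e he e' _ h
  obtain ⟨_, -, hu⟩ := hG.2.2.1 _ (mem_infEdges.1 he)
  exact (hu e rfl).trans (hu e' h.symm).symm

theorem card_infEdges : #G.infEdges = #G.sources := by
  refine card_nbij G.tail (fun e he => mem_sources.2 (mem_infEdges.1 he))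
    hG.injOn_tail_infEdges fun v hv => ?_
  obtain ⟨e, he, -⟩ := hG.2.2.1 v (mem_sources.1 hv)
  exact ⟨e, mem_infEdges.2 (he ▸ mem_sources.1 hv), he⟩

theorem card_compl_infElems : #G.infElemsᶜ = 2 * d - 1 := by
  have hcard := hG.card_eq_add_card_sources
  have hlen := hG.1.2
  have hle : #G.infEdges ≤ G.edges.length := (card_le_univ _).trans (by simp)
  rw [card_compl, Fintype.card_sum, Fintype.card_fin, infElems, card_disjSum, hG.card_infEdges]
  rw [hG.card_infEdges] at hle
  omega

end IsFloorDiagram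

/-- The indices `i` at which a marking of type `(α, β, γ, δ)` must mark a source of divergence
`-k`. -/
def sourceIndices (α γ : Vec) (k : ℕ) : Finset ℕ :=
  Icc (psum α (k - 1) + 1) (psum α k) ∪
    Icc (vabs α + 2 * psum γ (k - 1) + 1) (vabs α + 2 * psum γ k)

theorem card_sourceIndices {α γ : Vec} {k : ℕ} (hk : 1 ≤ k) :
    #(sourceIndices α γ k) = α k + 2 * γ k := by
  have hα := psum_eq_psum_sub_one_add α hk
  have hγ := psum_eq_psum_sub_one_add γ hk
  have hle := psum_le_vabs α k
  rw [sourceIndices, card_union_of_disjoint, Nat.card_Icc, Nat.card_Icc]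
  · omega
  · exact disjoint_left.2 fun i hi hi' => by simp only [mem_Icc] at hi hi'; omega

theorem sourceIndices_subset (α β γ δ : Vec) (k : ℕ) :
    sourceIndices α γ k ⊆ Icc 1 (mn α β γ δ) := by
  have := psum_le_vabs α k
  have := psum_le_vabs γ k
  have := mn_eq α β γ δ
  intro i hi
  simp only [sourceIndices, mem_union, mem_Icc] at hi ⊢
  omega

namespace IsMarking

variable {α β γ δ : Vec} {m : ℕ → V ⊕ Fin G.edges.length} (hm : G.IsMarking α β γ δ m)
include hm

theorem card_markedElems : #(G.markedElems m (mn α β γ δ)) = mn α β γ δ := by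
  rw [markedElems, card_image_of_injOn (by simpa using hm.inj), Nat.card_Icc]
  omega

theorem exists_source_of_mem_sourceIndices {k i : ℕ} (hk : 1 ≤ k)
    (hi : i ∈ sourceIndices α γ k) :
    ∃ v, m i = Sum.inl v ∧ G.IsSource v ∧ G.div v = -(k : ℤ) := by
  rcases mem_union.1 hi with hi | hi <;> rw [mem_Icc] at hi
  · exact hm.srcA k hk i hi.1 hi.2
  · exact hm.srcG k hk i hi.1 hi.2

theorem injOn_elemSource :
    Set.InjOn G.elemSource ↑(G.markedElems m (mn α β γ δ) ∩ G.infElems) := by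
  have hnot_both {v : V} (hv : G.IsSource v) {e : Fin G.edges.length} (he : G.tail e = v)
      (hvm : ∃ i ∈ Set.Icc 1 (mn α β γ δ), m i = Sum.inl v)
      (hem : ∃ i ∈ Set.Icc 1 (mn α β γ δ), m i = Sum.inr e) : False := by
    rcases hm.srcEdge v hv e (Or.inl he) with ⟨-, h⟩ | ⟨-, h⟩ <;> contradiction
  rintro (v | e) ha (v' | e') ha' h <;>
    simp only [coe_inter, Set.mem_inter_iff, mem_coe, mem_markedElems, infElems,
      inl_mem_disjSum, inr_mem_disjSum, mem_sources, mem_infEdges, elemSource, Sum.elim_inl,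
      Sum.elim_inr, id] at ha ha' h
  · rw [h]
  · exact (hnot_both ha.2 h.symm ha.1 ha'.1).elim
  · exact (hnot_both ha'.2 h ha'.1 ha.1).elim
  · obtain ⟨_, -, hu⟩ := hm.floor.2.2.1 _ ha.2
    rw [hu e rfl, hu e' h.symm]

theorem card_markedElems_inter_infElems :
    #(G.markedElems m (mn α β γ δ) ∩ G.infElems) = #G.sources := by
  refine card_nbij G.elemSource (fun a ha => elemSource_mem_sources (mem_inter.1 ha).2)
    hm.injOn_elemSource fun v hv => ?_
  have hv := mem_sources.1 hv
  obtain ⟨e, he, -⟩ := hm.floor.2.2.1 v hv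
  rcases hm.srcEdge v hv e (Or.inl he) with ⟨hvm, -⟩ | ⟨hem, -⟩
  · exact ⟨Sum.inl v, by simpa [mem_markedElems, infElems, mem_sources, hv] using hvm, rfl⟩
  · exact ⟨Sum.inr e, by simpa [mem_markedElems, infElems, mem_infEdges, he, hv] using hem, he⟩

theorem image_sourceIndices_subset {k : ℕ} (hk : 1 ≤ k) :
    (sourceIndices α γ k).image m ⊆ G.markedInfElemsOfWeight m (mn α β γ δ) k := by
  intro a ha
  obtain ⟨i, hi, rfl⟩ := mem_image.1 ha
  obtain ⟨v, hmi, hv, hdiv⟩ := hm.exists_source_of_mem_sourceIndices hk hi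
  rw [hv.div_eq, neg_inj, Nat.cast_inj] at hdiv
  rw [markedInfElemsOfWeight, mem_filter, mem_inter, mem_markedElems, hmi]
  exact ⟨⟨⟨i, by simpa using sourceIndices_subset α β γ δ k hi, hmi⟩,
    inl_mem_disjSum.2 (mem_sources.2 hv)⟩, hdiv⟩

theorem card_markedInfElemsOfWeight_le (k : ℕ) :
    #(G.markedInfElemsOfWeight m (mn α β γ δ) k) ≤ #(G.sources.filter (G.outWeight · = k)) :=
  card_le_card_of_injOn G.elemSource
    (fun a ha => by
      obtain ⟨ha, hw⟩ := mem_filter.1 ha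
      exact mem_filter.2 ⟨elemSource_mem_sources (mem_inter.1 ha).2, hw⟩)
    (hm.injOn_elemSource.mono fun a ha => (mem_filter.1 ha).1)

theorem le_card_filter_outWeight_eq {k : ℕ} (hk : 1 ≤ k) :
    α k + β k + 2 * γ k + 2 * δ k ≤ #(G.sources.filter (G.outWeight · = k)) := by
  set Ek := univ.filter fun e => G.IsInfEdge e ∧ G.weight e = k ∧
    ∃ i ∈ Set.Icc 1 (mn α β γ δ), m i = Sum.inr e
  have hEk : #Ek = β k + 2 * δ k := by
    rw [← hm.edgeCount k hk, ← Set.ncard_coe_finset, coe_filter]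
    simp only [mem_univ, true_and]
  have hedge : Ek.image Sum.inr ⊆ G.markedInfElemsOfWeight m (mn α β γ δ) k := by
    intro a ha
    obtain ⟨e, he, rfl⟩ := mem_image.1 ha
    obtain ⟨hinf, hwt, hmarked⟩ := (mem_filter.1 he).2
    have he' : e ∈ G.infEdges := mem_infEdges.2 ((isInfEdge_iff e).1 hinf)
    rw [markedInfElemsOfWeight, mem_filter, mem_inter]
    exact ⟨⟨mem_markedElems.2 hmarked, inr_mem_disjSum.2 he'⟩,
      (hm.floor.outWeight_tail he').trans hwt⟩
  have hdisj : Disjoint ((sourceIndices α γ k).image m) (Ek.image Sum.inr) := by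
    refine disjoint_left.2 fun a ha ha' => ?_
    obtain ⟨i, hi, rfl⟩ := mem_image.1 ha
    obtain ⟨v, hmi, -⟩ := hm.exists_source_of_mem_sourceIndices hk hi
    obtain ⟨e, -, he⟩ := mem_image.1 ha'
    exact Sum.inr_ne_inl (he.trans hmi)
  have hinjm : Set.InjOn m ↑(sourceIndices α γ k) :=
    hm.inj.mono fun i hi => by simpa using sourceIndices_subset α β γ δ k hi
  calc α k + β k + 2 * γ k + 2 * δ k
      = #((sourceIndices α γ k).image m) + #(Ek.image Sum.inr) := by
        rw [card_image_of_injOn hinjm, card_image_of_injective _ Sum.inr_injective,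
          card_sourceIndices hk, hEk]
        ring
    _ = #((sourceIndices α γ k).image m ∪ Ek.image Sum.inr) :=
        (card_union_of_disjoint hdisj).symm
    _ ≤ #(G.markedInfElemsOfWeight m (mn α β γ δ) k) :=
        card_le_card (union_subset (hm.image_sourceIndices_subset hk) hedge)
    _ ≤ #(G.sources.filter (G.outWeight · = k)) := hm.card_markedInfElemsOfWeight_le k

theorem card_sources_le : #G.sources ≤ vabs α + vabs β + 2 * vabs γ + 2 * vabs δ := by
  set d := vI α + vI β + 2 * vI γ + 2 * vI δ
  have hG : G.IsFloorDiagram d := hm.floor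
  have hmaps : ∀ v ∈ G.sources, G.outWeight v ∈ Icc 1 d := fun v hv =>
    mem_Icc.2 ⟨hG.one_le_outWeight hv,
      hG.sum_outWeight ▸ single_le_sum (f := G.outWeight) (fun _ _ => Nat.zero_le _) hv⟩
  have hsources : ∑ k ∈ Icc 1 d, k * #(G.sources.filter (G.outWeight · = k)) = d := by
    conv_rhs => rw [← hG.sum_outWeight, ← sum_fiberwise_of_maps_to hmaps]
    refine sum_congr rfl fun k _ => ?_
    rw [sum_congr rfl fun v hv => (mem_filter.1 hv).2, sum_const, smul_eq_mul, mul_comm]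
  have htype : ∑ k ∈ Icc 1 d, k * (α k + β k + 2 * γ k + 2 * δ k) = d := by
    simp only [mul_add, sum_add_distrib, mul_left_comm _ 2, ← mul_sum]
    rw [sum_Icc_mul_eq_vI α (by omega), sum_Icc_mul_eq_vI β (by omega),
      sum_Icc_mul_eq_vI γ (by omega), sum_Icc_mul_eq_vI δ (by omega)]
  have hα := sum_le_vabs α (Icc 1 d)
  have hβ := sum_le_vabs β (Icc 1 d)
  have hγ := sum_le_vabs γ (Icc 1 d)
  have hδ := sum_le_vabs δ (Icc 1 d)
  calc #G.sources = ∑ k ∈ Icc 1 d, #(G.sources.filter (G.outWeight · = k)) :=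
        card_eq_sum_card_fiberwise hmaps
    _ = ∑ k ∈ Icc 1 d, (α k + β k + 2 * γ k + 2 * δ k) :=
        (sum_eq_sum_of_le_of_sum_mul_eq (fun k hk => (mem_Icc.1 hk).1)
          (fun k hk => hm.le_card_filter_outWeight_eq (mem_Icc.1 hk).1)
          (htype.trans hsources.symm)).symm
    _ ≤ vabs α + vabs β + 2 * vabs γ + 2 * vabs δ := by
        simp only [sum_add_distrib, ← mul_sum]
        omega

theorem compl_infElems_subset : G.infElemsᶜ ⊆ G.markedElems m (mn α β γ δ) := by
  set I := G.markedElems m (mn α β γ δ)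
  have hsub : I \ G.infElems ⊆ G.infElemsᶜ := fun a ha => mem_compl.2 (mem_sdiff.1 ha).2
  have hcard : #G.infElemsᶜ ≤ #(I \ G.infElems) := by
    have hsplit := card_sdiff_add_card_inter I G.infElems
    have hS := hm.card_sources_le
    rw [hm.card_markedElems, hm.card_markedElems_inter_infElems, mn_eq] at hsplit
    rw [hm.floor.card_compl_infElems]
    omega
  rw [← eq_of_subset_of_card_le hsub hcard]
  exact sdiff_subset

end IsMarking

end WGraph

/-- For a marking `m` of type `(α,β,γ,δ)` of a floor diagram, every non-source vertex
and every edge not adjacent to a source lies in the image of `m`. -/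
theorem stmt6 {V : Type} [Fintype V] (G : WGraph V) (α β γ δ : Vec)
    (m : ℕ → V ⊕ Fin G.edges.length) (hm : G.IsMarking α β γ δ m) :
    (∀ v : V, ¬ G.IsSource v → ∃ i ∈ Set.Icc 1 (mn α β γ δ), m i = Sum.inl v) ∧
    (∀ e : Fin G.edges.length, ¬ G.IsInfEdge e →
      ∃ i ∈ Set.Icc 1 (mn α β γ δ), m i = Sum.inr e) := by
  have hcompl := hm.compl_infElems_subset
  refine ⟨fun v hv => ?_, fun e he => ?_⟩ <;> refine WGraph.mem_markedElems.1 (hcompl ?_)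
  · simpa [WGraph.infElems, WGraph.mem_sources] using hv
  · simpa [WGraph.infElems, WGraph.mem_infEdges, ← WGraph.isInfEdge_iff] using he
end

section
/- For any d ≥ 1, the genus 0 Gromov–Witten invariant N_2(d) of ℂP² is divisible by 2^{⌊(d−1)/2⌋}. -/
/-! Strong induction on `d`. The weight of each term of Kontsevich's recursion is divisible by
`d₁ d₂`. If `d₁` and `d₂` are both odd, the induction hypotheses already give
`2^((d₁-1)/2 + (d₂-1)/2) = 2^((d-2)/2) = 2^((d-1)/2)`; otherwise they fall short by at most one
factor of `2`, which the even one of `d₁, d₂` supplies. -/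

theorem mul_dvd_sq_mul_sq_mul_sub_pow_three_mul_mul {R : Type*} [CommRing R] (x y a b : R) :
    x * y ∣ x ^ 2 * y ^ 2 * a - x ^ 3 * y * b :=
  ⟨x * y * a - x ^ 2 * b, by ring⟩

theorem two_pow_half_pred_dvd_mul {m n d : ℕ} (hm : 1 ≤ m) (hn : 1 ≤ n) (hd : m + n = d) :
    (2 : ℤ) ^ ((d - 1) / 2) ∣ 2 ^ ((m - 1) / 2) * 2 ^ ((n - 1) / 2) * ((m : ℤ) * n) := by
  rw [← pow_add]
  by_cases hodd : m % 2 = 1 ∧ n % 2 = 1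
  · exact (pow_dvd_pow 2 (by omega)).mul_right _
  · have heven : (2 : ℤ) ∣ (m : ℤ) * n := by
      have : 2 ∣ m ∨ 2 ∣ n := by omega
      exact_mod_cast (Nat.Prime.dvd_mul Nat.prime_two).mpr this
    calc (2 : ℤ) ^ ((d - 1) / 2) ∣ 2 ^ ((m - 1) / 2 + (n - 1) / 2) * 2 := by
          rw [← pow_succ]; exact pow_dvd_pow 2 (by omega)
      _ ∣ 2 ^ ((m - 1) / 2 + (n - 1) / 2) * ((m : ℤ) * n) := mul_dvd_mul_left _ heven

/-- For any sequence `N₂ : ℕ → ℤ` satisfying `N₂(1) = 1` and Kontsevich's recursion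
`N₂(d) = Σ_{d₁+d₂=d, d₁,d₂ ≥ 1} N₂(d₁)N₂(d₂)(d₁²d₂² C(3d−4,3d₁−2) − d₁³d₂ C(3d−4,3d₁−1))`,
the number `N₂(d)` is divisible by `2^⌊(d−1)/2⌋` for every `d ≥ 1`. -/
theorem stmt13 (N : ℕ → ℤ) (hinit : N 1 = 1)
    (hrec : ∀ d, 2 ≤ d →
      N d = ∑ d₁ ∈ Finset.Ioo 0 d,
        N d₁ * N (d - d₁) *
          ((d₁ : ℤ) ^ 2 * ((d - d₁ : ℕ) : ℤ) ^ 2 * (Nat.choose (3 * d - 4) (3 * d₁ - 2) : ℤ)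
            - (d₁ : ℤ) ^ 3 * ((d - d₁ : ℕ) : ℤ) * (Nat.choose (3 * d - 4) (3 * d₁ - 1) : ℤ))) :
    ∀ d, 1 ≤ d → (2 : ℤ) ^ ((d - 1) / 2) ∣ N d := by
  intro d
  induction d using Nat.strong_induction_on with
  | _ d ih =>
    intro hd
    rcases hd.eq_or_lt with rfl | hd
    · simp [hinit]
    rw [hrec d hd]
    refine Finset.dvd_sum fun d₁ hd₁ => ?_
    obtain ⟨hd₁pos, hd₁lt⟩ := Finset.mem_Ioo.mp hd₁
    calc (2 : ℤ) ^ ((d - 1) / 2)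
        ∣ 2 ^ ((d₁ - 1) / 2) * 2 ^ ((d - d₁ - 1) / 2) * ((d₁ : ℤ) * ((d - d₁ : ℕ) : ℤ)) :=
          two_pow_half_pred_dvd_mul hd₁pos (by omega) (by omega)
      _ ∣ _ :=
          mul_dvd_mul (mul_dvd_mul (ih d₁ hd₁lt hd₁pos) (ih (d - d₁) (by omega) (by omega)))
            (mul_dvd_sq_mul_sq_mul_sub_pow_three_mul_mul _ _ _ _)
end
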